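/- arXiv:1701.03478 — 2 statements merged into one kernel-verified Lean document; each statement's English description precedes it below -/
import Mathlib

section
/- Let K = (G, M, I) be a formal context with G and M finite such that I ≠ G × M (there is at least one non-incident object/attribute pair). Then there exist g ∈ G and m ∈ M with (g,m) ∉ I such that 2 · (number of concepts of K_{-g-m}) ≥ (number of concepts of K); i.e., the subcontext K_{-g-m} is rich. -/
/-- Derivation of a set of objects: the attributes shared by all of them. -/
def intentOf {G M : Type*} (I : G → M → Prop) (S : Set G) : Set M :=
  {n | ∀ g ∈ S, I g n}

/-- Derivation of a set of attributes: the objects having all of them. -/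
def extentOf {G M : Type*} (I : G → M → Prop) (B : Set M) : Set G :=
  {g | ∀ n ∈ B, I g n}

/-- Double derivation (closure) of a set of objects. -/
def cl {G M : Type*} (I : G → M → Prop) (S : Set G) : Set G :=
  extentOf I (intentOf I S)

/-- A set of objects is an extent if it is closed under double derivation. -/
def IsExtent {G M : Type*} (I : G → M → Prop) (S : Set G) : Prop :=
  cl I S = S

/-- The number of concepts of the context equals its number of extents. -/
noncomputable def numConcepts {G M : Type*} (I : G → M → Prop) : ℕ :=
  {S : Set G | IsExtent I S}.ncard

/-- The context op^{g,m}(K): fill the row of `g` except at `m`,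
and fill the column of `m` except at `g`. -/
def opRel {G M : Type*} (I : G → M → Prop) (g : G) (m : M) : G → M → Prop :=
  fun h n => I h n ∨ (h = g ∧ n ≠ m) ∨ (h ≠ g ∧ n = m)

/-- `S` is an `R`-mixed generator. -/
def MixGen {G M : Type*} (I : G → M → Prop) (R S : Set G) : Prop :=
  ∀ g : G, (g ∈ S ∩ R → cl I (S \ {g}) ≠ cl I S) ∧
    (g ∉ S ∪ R → cl I (S ∪ {g}) ≠ cl I S)

/-- `S` strongly avoids `h` (with respect to the attribute `m`):
`S' ∩ (hᶜ \ {m}) ≠ ∅`. -/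
def StronglyAvoids {G M : Type*} (I : G → M → Prop) (m : M) (S : Set G) (h : G) : Prop :=
  ∃ n, n ∈ intentOf I S ∧ ¬ I h n ∧ n ≠ m

/-- `χ(S)`: the set of objects of `R = G \ m'` strongly avoided by `S`. -/
def chi {G M : Type*} (I : G → M → Prop) (m : M) (S : Set G) : Set G :=
  {h | ¬ I h m ∧ StronglyAvoids I m S h}

/-!
Fix a non-incident pair `(g₀, m)`, let `J` be the context with the attribute `m` deleted and
`R = {g | ¬ I g m}`. Every extent of `K` is an extent of `J` or a *new* extent `E`; a new extent
lies inside `m'`, equals the trace `J''(E) ∩ m'` and misses some `w ∈ J''(E) \ m'`.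

For an object `g`, call an extent `F` of `J` `g`-lonely if no other extent of `J` agrees with `F`
off `g`. The map `F ↦ F \ {g}` on the extents of `J` is at most two-to-one, injective exactly at
the lonely extents, and lands in the extents of `K_{-g-m}`; hence
`|Ext J| + |lonely_g| ≤ 2 · |Ext K_{-g-m}|`.

It remains to find `g ∈ R` with at least as many `g`-lonely extents as new extents. For a new
extent `E` and `x ∈ R`, either `J''(E)` is `x`-lonely, or `x ∉ J''(E)` and `J''(E) ∪ {x}` is an
extent of `J`, which is then `w`-lonely. This injects the pairs `(x, E)` into the pairs `(x', F)`
with `x' ∈ R` and `F` an `x'`-lonely extent, and averaging over `x'` gives the required `g`.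
-/

section Closure

variable {G N : Type*} {J : G → N → Prop}

def extents (J : G → N → Prop) : Set (Set G) :=
  {S | IsExtent J S}

theorem subset_cl (S : Set G) : S ⊆ cl J S :=
  subset_lowerPolar_upperPolar J S

theorem isExtent_cl (S : Set G) : IsExtent J (cl J S) :=
  lowerPolar_upperPolar_lowerPolar J _

theorem IsExtent.cl_subset {F S : Set G} (hF : IsExtent J F) (hSF : S ⊆ F) : cl J S ⊆ F :=
  (Order.isExtent_iff.2 hF).lowerPolar_upperPolar_subset hSF

theorem IsExtent.preimage_val {p : G → Prop} {F : Set G} (hF : IsExtent J F) :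
    IsExtent (fun (h : Subtype p) n => J h.1 n) (Subtype.val ⁻¹' F) := by
  refine Set.Subset.antisymm (fun h hh => ?_) (subset_cl _)
  rw [Set.mem_preimage, ← hF]
  exact fun n hn => hh n fun x hx => hn x hx

theorem ncard_image_sdiff_singleton_extents_le [Finite G] (g : G) :
    ((· \ {g}) '' extents J).ncard ≤ numConcepts (fun (h : {h // h ≠ g}) n => J h.1 n) := by
  refine Set.ncard_le_ncard_of_injOn (fun B => Subtype.val ⁻¹' B) ?_ ?_
  · rintro _ ⟨F, hF, rfl⟩
    have hg : Subtype.val ⁻¹' (F \ {g}) = (Subtype.val ⁻¹' F : Set {h // h ≠ g}) := by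
      ext ⟨h, hh⟩
      simp [hh]
    exact hg ▸ IsExtent.preimage_val hF
  · rintro _ ⟨F, -, rfl⟩ _ ⟨F', -, rfl⟩ hFF'
    ext x
    by_cases hx : x = g
    · simp [hx]
    · simpa [hx] using Set.ext_iff.1 hFF' ⟨x, hx⟩

end Closure

section Lonely

variable {α : Type*}

def IsLonely (𝓛 : Set (Set α)) (g : α) (F : Set α) : Prop :=
  ∀ F' ∈ 𝓛, F' \ {g} = F \ {g} → F' = F

theorem Set.eq_of_sdiff_singleton_eq {F F' : Set α} {g : α} (h : F \ {g} = F' \ {g})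
    (hg : g ∈ F ↔ g ∈ F') : F = F' := by
  ext x
  by_cases hx : x = g
  · subst hx; exact hg
  · simpa [hx] using Set.ext_iff.1 h x

theorem ncard_add_ncard_lonely_le [Finite α] (𝓛 : Set (Set α)) (g : α) :
    𝓛.ncard + {F ∈ 𝓛 | IsLonely 𝓛 g F}.ncard ≤ 2 * ((· \ {g}) '' 𝓛).ncard := by
  classical
  -- a lonely `F` is sent a second time, with the tag its missing partner `F ∆ {g}` would get
  let code : 𝓛 ⊕ {F ∈ 𝓛 | IsLonely 𝓛 g F} → ((· \ {g}) '' 𝓛) × Bool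
    | .inl F => (⟨F.1 \ {g}, Set.mem_image_of_mem _ F.2⟩, decide (g ∈ F.1))
    | .inr F => (⟨F.1 \ {g}, Set.mem_image_of_mem _ F.2.1⟩, !decide (g ∈ F.1))
  have hcode : Function.Injective code := by
    rintro (⟨F, hF⟩ | ⟨F, hF, hlon⟩) (⟨F', hF'⟩ | ⟨F', hF', hlon'⟩) h <;>
      simp only [code, Prod.mk.injEq, Subtype.mk.injEq, Bool.not_inj_iff, decide_eq_decide] at h
    · exact congrArg _ (Subtype.ext (Set.eq_of_sdiff_singleton_eq h.1 h.2))
    · simpa [hlon' F hF h.1] using h.2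
    · simpa [hlon F' hF' h.1.symm] using h.2
    · exact congrArg _ (Subtype.ext (Set.eq_of_sdiff_singleton_eq h.1 h.2))
  simpa [mul_comm] using Nat.card_le_card_of_injective code hcode

theorem isLonely_of_mem_cl {G N : Type*} {J : G → N → Prop} {E F : Set G} {x : G}
    (hF : IsExtent J F) (hEF : E ⊆ F \ {x}) (hx : x ∈ cl J E) :
    IsLonely (extents J) x F := by
  intro F' (hF' : IsExtent J F') hdiff
  have hxF : x ∈ F := hF.cl_subset (hEF.trans Set.sdiff_subset) hx
  have hxF' : x ∈ F' := hF'.cl_subset (hdiff ▸ hEF |>.trans Set.sdiff_subset) hx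
  exact Set.eq_of_sdiff_singleton_eq hdiff (iff_of_true hxF' hxF)

end Lonely

section DeleteAttr

variable {G M : Type*}

def deleteAttr (I : G → M → Prop) (m : M) : G → {n : M // n ≠ m} → Prop :=
  fun h n => I h n.1

variable {I : G → M → Prop} {m : M} {E : Set G}

theorem mem_cl_iff_mem_cl_deleteAttr {h : G} :
    h ∈ cl I E ↔ h ∈ cl (deleteAttr I m) E ∧ ((∀ x ∈ E, I x m) → I h m) := by
  refine ⟨fun hh => ⟨fun n hn => hh n.1 hn, hh m⟩, fun ⟨hJ, hm⟩ n hn => ?_⟩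
  by_cases hnm : n = m
  · exact hnm ▸ hm (hnm ▸ hn)
  · exact hJ ⟨n, hnm⟩ hn

theorem subset_setOf_of_not_isExtent_deleteAttr (hE : IsExtent I E)
    (hE' : ¬ IsExtent (deleteAttr I m) E) : E ⊆ {h | I h m} := by
  intro x₀ hx₀
  by_contra hx₀m
  refine hE' (Set.Subset.antisymm (fun h hh => ?_) (subset_cl E))
  rw [← hE]
  exact mem_cl_iff_mem_cl_deleteAttr.2 ⟨hh, fun hm => absurd (hm x₀ hx₀) hx₀m⟩

theorem cl_deleteAttr_inter_eq_of_not_isExtent (hE : IsExtent I E)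
    (hE' : ¬ IsExtent (deleteAttr I m) E) : cl (deleteAttr I m) E ∩ {h | I h m} = E := by
  have hEm := subset_setOf_of_not_isExtent_deleteAttr hE hE'
  refine Set.Subset.antisymm (fun h ⟨hJ, hm⟩ => ?_) (Set.subset_inter (subset_cl E) hEm)
  rw [← hE]
  exact mem_cl_iff_mem_cl_deleteAttr.2 ⟨hJ, fun _ => hm⟩

theorem exists_mem_cl_deleteAttr_not_of_not_isExtent (hE : IsExtent I E)
    (hE' : ¬ IsExtent (deleteAttr I m) E) : ∃ w ∈ cl (deleteAttr I m) E, ¬ I w m := by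
  obtain ⟨w, hwC, hwE⟩ := Set.exists_of_ssubset
    ((subset_cl E).ssubset_of_ne (Ne.symm hE'))
  exact ⟨w, hwC, fun hwm => hwE (cl_deleteAttr_inter_eq_of_not_isExtent hE hE' ▸ ⟨hwC, hwm⟩)⟩

end DeleteAttr

section Encoding

variable {G M : Type*} {I : G → M → Prop} {m : M}

/-- `(x', F)` is the image of `(x, E)` under the injection: `E` is the trace `F ∩ m'`, and `x` is
`x'` when `F = J''(E)` and the one point of `F \ J''(E)` otherwise. -/
def Encodes (I : G → M → Prop) (m : M) (x' : G) (F : Set G) (x : G) (E : Set G) : Prop :=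
  F ∩ {h | I h m} = E ∧
    (F = cl (deleteAttr I m) E ∧ x' = x ∨
      F = insert x (cl (deleteAttr I m) E) ∧ x ∉ cl (deleteAttr I m) E)

theorem exists_encodes {E : Set G} (hE : IsExtent I E) (hE' : ¬ IsExtent (deleteAttr I m) E)
    {x : G} (hx : ¬ I x m) :
    ∃ x' F, ¬ I x' m ∧ F ∈ extents (deleteAttr I m) ∧
      IsLonely (extents (deleteAttr I m)) x' F ∧ Encodes I m x' F x E := by
  set C := cl (deleteAttr I m) E
  have hEm := subset_setOf_of_not_isExtent_deleteAttr hE hE'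
  have htrace : C ∩ {h | I h m} = E := cl_deleteAttr_inter_eq_of_not_isExtent hE hE'
  by_cases hlon : IsLonely (extents (deleteAttr I m)) x C
  · exact ⟨x, C, hx, isExtent_cl E, hlon, htrace, .inl ⟨rfl, rfl⟩⟩
  have hxC : x ∉ C := fun hxC => hlon <| isLonely_of_mem_cl (isExtent_cl E)
    (fun y hy => ⟨subset_cl E hy, fun hyx => hx (hyx ▸ hEm hy)⟩) hxC
  have hins : IsExtent (deleteAttr I m) (insert x C) := by
    simp only [IsLonely, not_forall] at hlon
    obtain ⟨F', hF', hdiff, hne⟩ := hlon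
    have hxF' : x ∈ F' := by
      by_contra hxF'
      rw [Set.sdiff_singleton_eq_self hxF', Set.sdiff_singleton_eq_self hxC] at hdiff
      exact hne hdiff
    rwa [← Set.insert_sdiff_self_of_mem hxF', hdiff, Set.sdiff_singleton_eq_self hxC] at hF'
  obtain ⟨w, hwC, hw⟩ := exists_mem_cl_deleteAttr_not_of_not_isExtent hE hE'
  refine ⟨w, insert x C, hw, hins, isLonely_of_mem_cl hins
    (fun y hy => ⟨.inr (subset_cl E hy), fun hyw => hw (hyw ▸ hEm hy)⟩) hwC, ?_, .inr ⟨rfl, hxC⟩⟩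
  rw [Set.insert_inter_of_notMem (show x ∉ {h | I h m} from hx), htrace]

theorem Encodes.unique {x' x₁ x₂ : G} {F E₁ E₂ : Set G} (h₁ : Encodes I m x' F x₁ E₁)
    (h₂ : Encodes I m x' F x₂ E₂) : x₁ = x₂ ∧ E₁ = E₂ := by
  obtain rfl : E₁ = E₂ := h₁.1.symm.trans h₂.1
  refine ⟨?_, rfl⟩
  rcases h₁.2 with ⟨rfl, rfl⟩ | ⟨rfl, hx₁⟩ <;> rcases h₂.2 with ⟨hF, rfl⟩ | ⟨hF, hx₂⟩
  · rfl
  · exact absurd (hF ▸ Set.mem_insert x₂ _) hx₂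
  · exact absurd (hF ▸ Set.mem_insert x₁ _) hx₁
  · exact (Set.insert_inj hx₁).1 hF

theorem exists_ncard_sdiff_extents_le_ncard_lonely [Finite G] (hR : ∃ g, ¬ I g m) :
    ∃ g, ¬ I g m ∧ (extents I \ extents (deleteAttr I m)).ncard ≤
      {F ∈ extents (deleteAttr I m) | IsLonely (extents (deleteAttr I m)) g F}.ncard := by
  classical
  have := Fintype.ofFinite G
  let R : Finset G := {g | ¬ I g m}
  let New := (extents I \ extents (deleteAttr I m)).toFinset
  let Lon (x : G) :=
    {F ∈ extents (deleteAttr I m) | IsLonely (extents (deleteAttr I m)) x F}.toFinset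
  have hcount : ∑ _x ∈ R, New.card ≤ ∑ x ∈ R, (Lon x).card := by
    rw [Finset.sum_const, smul_eq_mul, ← Finset.card_product, ← Finset.card_sigma]
    refine Finset.card_le_card_of_forall_subsingleton
      (fun p q => Encodes I m q.1 q.2 p.1 p.2) ?_ ?_
    · rintro ⟨x, E⟩ hxE
      simp only [R, New, Finset.mem_product, Finset.mem_filter, Finset.mem_univ,
        true_and, Set.mem_toFinset, Set.mem_sdiff] at hxE
      obtain ⟨x', F, hx', hF, hlon, henc⟩ := exists_encodes hxE.2.1 hxE.2.2 hxE.1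
      exact ⟨⟨x', F⟩, by simp [R, Lon, hx', hlon, hF], henc⟩
    · rintro q - ⟨x₁, E₁⟩ ⟨-, h₁⟩ ⟨x₂, E₂⟩ ⟨-, h₂⟩
      obtain ⟨rfl, rfl⟩ := h₁.unique h₂
      rfl
  obtain ⟨g₀, hg₀⟩ := hR
  obtain ⟨g, hgR, hg⟩ := Finset.exists_le_of_sum_le ⟨g₀, by simpa [R] using hg₀⟩ hcount
  refine ⟨g, by simpa [R] using hgR, ?_⟩
  simpa [New, Lon, Set.ncard_eq_toFinset_card'] using hg

end Encoding

theorem statement1_general {G M : Type*} [Fintype G] (I : G → M → Prop)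
    (hI : {p : G × M | I p.1 p.2} ≠ Set.univ) :
    ∃ (g : G) (m : M), ¬ I g m ∧
      numConcepts I ≤
        2 * numConcepts (fun (h : {h : G // h ≠ g}) (n : {n : M // n ≠ m}) => I h.1 n.1) := by
  obtain ⟨⟨g₀, m⟩, hg₀m⟩ := Set.ne_univ_iff_exists_notMem _ |>.1 hI
  obtain ⟨g, hgm, hnew⟩ := exists_ncard_sdiff_extents_le_ncard_lonely (I := I) (m := m) ⟨g₀, hg₀m⟩
  refine ⟨g, m, hgm, ?_⟩
  calc numConcepts I
      ≤ (extents I \ extents (deleteAttr I m)).ncard + (extents (deleteAttr I m)).ncard :=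
        Set.ncard_le_ncard_sdiff_add_ncard _ _
    _ ≤ (extents (deleteAttr I m)).ncard + {F ∈ extents (deleteAttr I m) |
          IsLonely (extents (deleteAttr I m)) g F}.ncard := by omega
    _ ≤ 2 * ((· \ {g}) '' extents (deleteAttr I m)).ncard := ncard_add_ncard_lonely_le _ g
    _ ≤ _ := Nat.mul_le_mul_left 2 (ncard_image_sdiff_singleton_extents_le g)

theorem statement1 {G M : Type*} [Fintype G] [Fintype M] (I : G → M → Prop)
    (hI : {p : G × M | I p.1 p.2} ≠ Set.univ) :
    ∃ (g : G) (m : M), ¬ I g m ∧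
      numConcepts I ≤
        2 * numConcepts (fun (h : {h : G // h ≠ g}) (n : {n : M // n ≠ m}) => I h.1 n.1) :=
  statement1_general I hI
end

section
/- Let K = (G, M, I) be a formal context, R ⊆ G, and let S be an R-mixed generator. Suppose g ∈ G \ S is an object such that (S ∪ {g})'' = S'' ∪ {g}, g^c ≠ ∅, and g^c ∩ h^c = ∅ for every h ∈ S, where h^c denotes M \ h'. Then S ∪ {g} is an R-mixed generator. -/
lemma key_lemma {G M : Type*} (I : G → M → Prop) (g : G) (T : Set G)
    (h : ∀ n, ¬ I g n → n ∈ intentOf I T) :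
    cl I T = cl I (T ∪ {g}) ∩ extentOf I {n : M | ¬ I g n} := by
  ext x
  simp only [cl, extentOf, intentOf, Set.mem_setOf_eq, Set.mem_inter_iff, Set.mem_union,
    Set.mem_singleton_iff]
  constructor
  · intro hx
    exact ⟨fun n hn => hx n (fun h' hh => hn h' (Or.inl hh)), fun n hn => hx n (h n hn)⟩
  · rintro ⟨h1, h2⟩ n hn
    by_cases hg : I g n
    · exact h1 n (fun h' hh => hh.elim (hn h') (fun e => e ▸ hg))
    · exact h2 n hg

lemma subset_cl_s6 {G M : Type*} (I : G → M → Prop) (T : Set G) : T ⊆ cl I T :=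
  fun x hx n hn => hn x hx

theorem statement6 {G M : Type*} (I : G → M → Prop) (R : Set G) (S : Set G)
    (hS : MixGen I R S) (g : G) (hgS : g ∉ S)
    (hclosure : cl I (S ∪ {g}) = cl I S ∪ {g})
    (hgc : {n : M | ¬ I g n} ≠ ∅)
    (hdisj : ∀ h ∈ S, {n : M | ¬ I g n} ∩ {n : M | ¬ I h n} = ∅) :
    MixGen I R (S ∪ {g}) := by
  obtain ⟨n0, hn0⟩ := Set.nonempty_iff_ne_empty.mpr hgc
  have hsubS : ∀ n, ¬ I g n → n ∈ intentOf I S := by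
    intro n hn h hh
    by_contra hc
    
    exact Set.eq_empty_iff_forall_notMem.mp (hdisj h hh) n ⟨hn, hc⟩
  have hgext : g ∉ extentOf I {n : M | ¬ I g n} := fun h => hn0 (h n0 hn0)
  have hclSext : cl I S ⊆ extentOf I {n : M | ¬ I g n} :=
    fun x hx n hn => hx n (hsubS n hn)
  have hgcl : g ∉ cl I S := fun h => hgext (hclSext h)
  have hinter : (cl I S ∪ {g}) ∩ extentOf I {n : M | ¬ I g n} = cl I S := by
    ext x
    constructor
    · rintro ⟨hx1 | hx1, hx2⟩
      · exact hx1
      · exact absurd (hx1 ▸ hx2) hgext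
    · exact fun hx => ⟨Or.inl hx, hclSext hx⟩
  intro x
  constructor
  · rintro ⟨hx1, hx2⟩
    rcases hx1 with hxS | hxg
    · -- x ∈ S, so x ≠ g
      have hxne : x ≠ g := fun e => hgS (e ▸ hxS)
      have hset : (S ∪ {g}) \ {x} = (S \ {x}) ∪ {g} := by
        ext y
        simp only [Set.mem_diff, Set.mem_union, Set.mem_singleton_iff]
        constructor
        · rintro ⟨hy1 | hy1, hy2⟩
          · exact Or.inl ⟨hy1, hy2⟩
          · exact Or.inr hy1
        · rintro (⟨hy1, hy2⟩ | hy1)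
          · exact ⟨Or.inl hy1, hy2⟩
          · exact ⟨Or.inr hy1, fun e => hxne ((e ▸ hy1 : x = g))⟩
      rw [hset, hclosure]
      intro heq
      have hsub' : ∀ n, ¬ I g n → n ∈ intentOf I (S \ {x}) :=
        fun n hn h hh => hsubS n hn h hh.1
      have : cl I (S \ {x}) = cl I S := by
        rw [key_lemma I g _ hsub', heq, hinter]
      exact (hS x).1 ⟨hxS, hx2⟩ this
    · -- x = g
      rw [Set.mem_singleton_iff] at hxg
      subst hxg
      have hset : (S ∪ {x}) \ {x} = S := by
        ext y
        simp only [Set.mem_diff, Set.mem_union, Set.mem_singleton_iff]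
        constructor
        · rintro ⟨hy1 | hy1, hy2⟩
          · exact hy1
          · exact absurd hy1 hy2
        · exact fun hy => ⟨Or.inl hy, fun e => hgS (e ▸ hy)⟩
      rw [hset, hclosure]
      intro heq
      exact hgcl (heq ▸ Or.inr rfl)
  · intro hx heq
    have hxS : x ∉ S := fun h => hx (Or.inl (Or.inl h))
    have hxR : x ∉ R := fun h => hx (Or.inr h)
    have hxg : x ≠ g := fun e => hx (Or.inl (Or.inr e))
    rw [hclosure] at heq
    have hcomm : S ∪ {g} ∪ {x} = (S ∪ {x}) ∪ {g} := by
      ext y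
      simp only [Set.mem_union]
      tauto
    rw [hcomm] at heq
    have hxcl : x ∈ cl I S ∪ {g} := heq ▸ subset_cl_s6 I _ (Or.inl (Or.inr rfl))
    have hxclS : x ∈ cl I S := hxcl.resolve_right (fun e => hxg e)
    have hsub' : ∀ n, ¬ I g n → n ∈ intentOf I (S ∪ {x}) := by
      intro n hn h hh
      rcases hh with hh | hh
      · exact hsubS n hn h hh
      · rw [Set.mem_singleton_iff] at hh
        exact hh ▸ hxclS n (hsubS n hn)
    have : cl I (S ∪ {x}) = cl I S := by
      rw [key_lemma I g _ hsub', heq, hinter]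
    exact (hS x).2 (fun h => h.elim hxS hxR) this
end
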